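/- arXiv:1912.01090 — 7 statements merged into one kernel-verified Lean document; each statement's English description precedes it below -/
import Mathlib

section
/- If n ≥ m ≥ 0 are natural numbers, then the number of powers of 2 appearing in both the binary expansion of n and the binary expansion of n-m is at least σ(n) - σ(m). -/
/-!
Write `n = k + m` and induct on `k`, peeling off the last binary digit of `k` and of `m`.
Halving both preserves everything, and a last digit `1` in `n` is either shared with `k`
(when `m` is even) or paid for by the last digit of `m` (when `m` is odd). The only delicate
case is `k` and `m` both odd: then `n/2 = k/2 + (m/2 + 1)`, and the carry is absorbed by
`σ(m/2 + 1) ≤ σ(m/2) + 1`.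
-/

/-- Stirling numbers of the second kind. -/
def stirling2 : ℕ → ℕ → ℕ
  | 0, 0 => 1
  | 0, _ + 1 => 0
  | _ + 1, 0 => 0
  | n + 1, k + 1 => (k + 1) * stirling2 n (k + 1) + stirling2 n k

/-- Sum of base-2 digits. -/
def sigma2 (n : ℕ) : ℕ := (Nat.digits 2 n).sum

/-- The set of powers of 2 appearing in the binary expansion of `n`. -/
def twoPows (n : ℕ) : Finset ℕ := (Nat.bitIndices n).toFinset.image (2 ^ ·)

open Finset

lemma sigma2_two_mul (a : ℕ) : sigma2 (2 * a) = sigma2 a := by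
  rcases a.eq_zero_or_pos with rfl | ha
  · rfl
  · simp [sigma2, Nat.digits_def' one_lt_two (by omega : 0 < 2 * a)]

lemma sigma2_two_mul_add_one (a : ℕ) : sigma2 (2 * a + 1) = sigma2 a + 1 := by
  rw [sigma2, Nat.digits_def' one_lt_two (by omega), List.sum_cons, Nat.mul_add_mod,
    Nat.mul_add_div two_pos]
  simp [sigma2, add_comm]

lemma sigma2_succ_le (n : ℕ) : sigma2 (n + 1) ≤ sigma2 n + 1 := by
  induction n using Nat.strong_induction_on with
  | _ n ih =>
    obtain ⟨a, rfl | rfl⟩ := n.even_or_odd'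
    · rw [sigma2_two_mul_add_one, sigma2_two_mul]
    · rw [show 2 * a + 1 + 1 = 2 * (a + 1) by ring, sigma2_two_mul, sigma2_two_mul_add_one]
      have := ih a (by omega)
      omega

lemma twoPows_two_mul (a : ℕ) : twoPows (2 * a) = (twoPows a).image (2 * ·) := by
  ext x
  simp [twoPows, -Nat.mem_bitIndices, pow_succ']

lemma twoPows_two_mul_add_one (a : ℕ) :
    twoPows (2 * a + 1) = insert 1 ((twoPows a).image (2 * ·)) := by
  ext x
  simp [twoPows, -Nat.mem_bitIndices, pow_succ', eq_comm]

lemma one_notMem_image_two_mul (s : Finset ℕ) : 1 ∉ s.image (2 * ·) := by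
  simp

lemma image_two_mul_inter_image_two_mul (s t : Finset ℕ) :
    s.image (2 * ·) ∩ t.image (2 * ·) = (s ∩ t).image (2 * ·) :=
  (image_inter s t (mul_right_injective₀ two_ne_zero)).symm

lemma card_image_two_mul (s : Finset ℕ) : #(s.image (2 * ·)) = #s :=
  card_image_of_injective s (mul_right_injective₀ two_ne_zero)

theorem sigma2_add_le_card_twoPows_inter_add_sigma2 (k m : ℕ) :
    sigma2 (k + m) ≤ #(twoPows (k + m) ∩ twoPows k) + sigma2 m := by
  induction k using Nat.strong_induction_on generalizing m with
  | _ k ih =>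
    rcases k.eq_zero_or_pos with rfl | hk
    · simp
    obtain ⟨a, rfl | rfl⟩ := k.even_or_odd' <;> obtain ⟨b, rfl | rfl⟩ := m.even_or_odd'
    · have := ih a (by omega) b
      rwa [← mul_add, sigma2_two_mul, sigma2_two_mul, twoPows_two_mul, twoPows_two_mul,
        image_two_mul_inter_image_two_mul, card_image_two_mul]
    · have := ih a (by omega) b
      rw [← add_assoc, ← mul_add, sigma2_two_mul_add_one, sigma2_two_mul_add_one,
        twoPows_two_mul_add_one, twoPows_two_mul,
        insert_inter_of_notMem (one_notMem_image_two_mul _),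
        image_two_mul_inter_image_two_mul, card_image_two_mul]
      omega
    · have := ih a (by omega) b
      rw [show 2 * a + 1 + 2 * b = 2 * (a + b) + 1 by ring, sigma2_two_mul_add_one,
        sigma2_two_mul, twoPows_two_mul_add_one, twoPows_two_mul_add_one,
        insert_inter_of_mem (mem_insert_self _ _),
        inter_insert_of_notMem (one_notMem_image_two_mul _),
        image_two_mul_inter_image_two_mul, card_insert_of_notMem (one_notMem_image_two_mul _),
        card_image_two_mul]
      omega
    · have := ih a (by omega) (b + 1)
      have := sigma2_succ_le b
      rw [show 2 * a + 1 + (2 * b + 1) = 2 * (a + (b + 1)) by ring, sigma2_two_mul,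
        sigma2_two_mul_add_one, twoPows_two_mul_add_one, twoPows_two_mul,
        inter_insert_of_notMem (one_notMem_image_two_mul _),
        image_two_mul_inter_image_two_mul, card_image_two_mul]
      omega

theorem stmt_2 (n m : ℕ) (h : m ≤ n) :
    ((twoPows n ∩ twoPows (n - m)).card : ℤ) ≥ (sigma2 n : ℤ) - sigma2 m := by
  have := sigma2_add_le_card_twoPows_inter_add_sigma2 (n - m) m
  rw [Nat.sub_add_cancel h] at this
  omega
end

section
/- If the binomial coefficient C(b, a) is odd (with b ≥ a ≥ 0), then #([b] ∩ [b-a]) = #[b-a] = σ(b) - σ(a). -/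
/-! By Lucas' theorem mod 2, `C(b, a)` odd forces every binary digit of `a` to be at most
the corresponding digit of `b`, i.e. `[a] ⊆ [b]`. Then `b - a` is computed without borrows, so
`[b - a] = [b] \ [a]`, which lies in `[b]` and has `σ(b) - σ(a)` elements. -/

namespace Nat

theorem odd_choose_mod_two_and_div_two {n k : ℕ} (h : Odd (n.choose k)) :
    Odd ((n % 2).choose (k % 2)) ∧ Odd ((n / 2).choose (k / 2)) := by
  have lucas := Choose.choose_modEq_choose_mod_mul_choose_div_nat (p := 2) (n := n) (k := k)
  rw [← odd_mul, odd_iff, ← lucas, ← odd_iff]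
  exact h

theorem testBit_of_odd_choose {n k i : ℕ} (h : Odd (n.choose k)) (hk : k.testBit i) :
    n.testBit i := by
  induction i generalizing n k with
  | zero =>
    have hmod := (odd_choose_mod_two_and_div_two h).1
    rw [testBit_zero, decide_eq_true_eq] at hk ⊢
    by_contra hn
    rw [mod_two_ne_one.mp hn, hk] at hmod
    simp at hmod
  | succ i ih =>
    rw [testBit_succ] at hk ⊢
    exact ih (odd_choose_mod_two_and_div_two h).2 hk

theorem toFinset_bitIndices_subset_of_odd_choose {n k : ℕ} (h : Odd (n.choose k)) :
    k.bitIndices.toFinset ⊆ n.bitIndices.toFinset := by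
  intro i
  simpa using testBit_of_odd_choose h

theorem toFinset_bitIndices_sub {n k : ℕ} (hkn : k.bitIndices.toFinset ⊆ n.bitIndices.toFinset) :
    (n - k).bitIndices.toFinset = n.bitIndices.toFinset \ k.bitIndices.toFinset := by
  have hsum : k + ∑ i ∈ n.bitIndices.toFinset \ k.bitIndices.toFinset, 2 ^ i = n := by
    rw [← Finset.sum_toFinset_bitIndices_two_pow k, Finset.toFinset_bitIndices_sum_two_pow,
      ← Finset.sum_union Finset.disjoint_sdiff, Finset.union_sdiff_of_subset hkn,
      Finset.sum_toFinset_bitIndices_two_pow]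
  rw [← Nat.eq_sub_of_add_eq' hsum, Finset.toFinset_bitIndices_sum_two_pow]

theorem sum_digits_two_eq_length_bitIndices (n : ℕ) :
    (digits 2 n).sum = n.bitIndices.length := by
  induction n using binaryRec with
  | zero => simp
  | bit b n ih =>
    cases b
    · rcases eq_or_ne n 0 with rfl | hn
      · simp
      · simp [digits_def' one_lt_two (by omega : 0 < 2 * n), ih]
    · have hmod : (2 * n + 1) % 2 = 1 := by omega
      have hdiv : (2 * n + 1) / 2 = n := by omega
      rw [bit_true, digits_def' one_lt_two (by omega : 0 < 2 * n + 1), hmod, hdiv,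
        bitIndices_two_mul_add_one]
      simp [ih, add_comm]

end Nat

theorem sigma2_eq_card (n : ℕ) : sigma2 n = n.bitIndices.toFinset.card := by
  rw [sigma2, Nat.sum_digits_two_eq_length_bitIndices,
    List.toFinset_card_of_nodup Nat.bitIndices_nodup]

theorem card_twoPows (n : ℕ) : (twoPows n).card = n.bitIndices.toFinset.card :=
  Finset.card_image_of_injective _ (Nat.pow_right_injective le_rfl)

theorem stmt_3_general (a b : ℕ) (h : Odd (Nat.choose b a)) :
    (twoPows b ∩ twoPows (b - a)).card = (twoPows (b - a)).card ∧
      ((twoPows b ∩ twoPows (b - a)).card : ℤ) = (sigma2 b : ℤ) - sigma2 a := by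
  have hsub := Nat.toFinset_bitIndices_subset_of_odd_choose h
  have hdiff := Nat.toFinset_bitIndices_sub hsub
  have hinter : twoPows b ∩ twoPows (b - a) = twoPows (b - a) := by
    refine Finset.inter_eq_right.mpr (Finset.image_subset_image ?_)
    exact hdiff ▸ Finset.sdiff_subset
  refine ⟨by rw [hinter], ?_⟩
  rw [hinter, card_twoPows, hdiff, Finset.card_sdiff_of_subset hsub, sigma2_eq_card,
    sigma2_eq_card, Nat.cast_sub (Finset.card_le_card hsub)]

theorem stmt_3 (a b : ℕ) (hab : a ≤ b) (h : Odd (Nat.choose b a)) :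
    (twoPows b ∩ twoPows (b - a)).card = (twoPows (b - a)).card ∧
      ((twoPows b ∩ twoPows (b - a)).card : ℤ) = (sigma2 b : ℤ) - sigma2 a :=
  stmt_3_general a b h
end

section
/- If b is an odd integer greater than 1, then #([b] ∩ [b-3]) = σ(b) - 2; if b is an even integer greater than 2, then #([b] ∩ [b-3]) = σ(b) - 1. -/
open Finset

def bitSet (n : ℕ) : Finset ℕ := n.bitIndices.toFinset

@[simp]
lemma mem_bitSet {i n : ℕ} : i ∈ bitSet n ↔ n.testBit i := by
  simp [bitSet]

lemma bitSet_and (m n : ℕ) : bitSet (m &&& n) = bitSet m ∩ bitSet n := by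
  ext i
  simp [Nat.testBit_and]

lemma card_twoPows_inter (m n : ℕ) : #(twoPows m ∩ twoPows n) = #(bitSet (m &&& n)) := by
  have hinj : Function.Injective (2 ^ · : ℕ → ℕ) := Nat.pow_right_injective le_rfl
  rw [twoPows, twoPows, ← image_inter _ _ hinj, card_image_of_injective _ hinj, bitSet_and,
    bitSet, bitSet]

lemma lt_of_mem_bitSet {j k r : ℕ} (hr : r < 2 ^ k) (hj : j ∈ bitSet r) : j < k := by
  by_contra! hkj
  have := Nat.testBit_lt_two_pow (hr.trans_le (Nat.pow_le_pow_right two_pos hkj))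
  simp_all

lemma bitSet_two_pow_mul_add {k r : ℕ} (hr : r < 2 ^ k) (a : ℕ) :
    bitSet (2 ^ k * a + r) = bitSet r ∪ (bitSet a).map (addRightEmbedding k) := by
  ext j
  have hlt := @lt_of_mem_bitSet j k r hr
  simp only [mem_bitSet, Nat.testBit_two_pow_mul_add a hr, mem_union, mem_map,
    addRightEmbedding_apply] at hlt ⊢
  split_ifs with hj
  · simp only [iff_self_or]
    omega
  · simp only [show r.testBit j = false by simpa [hj] using mt hlt, Bool.false_eq_true, false_or]
    exact ⟨fun h => ⟨j - k, h, by omega⟩, by rintro ⟨i, hi, rfl⟩; simpa using hi⟩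

lemma card_bitSet_two_pow_mul_add {k r : ℕ} (hr : r < 2 ^ k) (a : ℕ) :
    #(bitSet (2 ^ k * a + r)) = #(bitSet r) + #(bitSet a) := by
  rw [bitSet_two_pow_mul_add hr, card_union_of_disjoint, card_map]
  rw [disjoint_left]
  intro j hj
  simp only [mem_map, addRightEmbedding_apply, not_exists, not_and]
  have := lt_of_mem_bitSet hr hj
  omega

lemma sigma2_eq_card_bitSet (n : ℕ) : sigma2 n = #(bitSet n) := by
  induction n using Nat.strong_induction_on with
  | _ n ih =>
    rcases Nat.eq_zero_or_pos n with rfl | hn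
    · rfl
    have hsplit := card_bitSet_two_pow_mul_add (k := 1) (by simpa using Nat.mod_lt n two_pos) (n / 2)
    rw [pow_one, Nat.div_add_mod] at hsplit
    rw [sigma2, Nat.digits_def' one_lt_two hn, List.sum_cons, ← sigma2, ih _ (by omega), hsplit]
    rcases Nat.mod_two_eq_zero_or_one n with h | h <;> rw [h] <;> rfl

lemma sigma2_two_pow_mul_add {k r : ℕ} (hr : r < 2 ^ k) (a : ℕ) :
    sigma2 (2 ^ k * a + r) = sigma2 r + sigma2 a := by
  simp only [sigma2_eq_card_bitSet, card_bitSet_two_pow_mul_add hr]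

lemma two_pow_mul_add_and_two_pow_mul_add {k r r' : ℕ} (hr : r < 2 ^ k) (hr' : r' < 2 ^ k)
    (a c : ℕ) : (2 ^ k * a + r) &&& (2 ^ k * c + r') = 2 ^ k * (a &&& c) + (r &&& r') := by
  apply Nat.eq_of_testBit_eq
  intro j
  simp only [Nat.testBit_and, Nat.testBit_two_pow_mul_add _ hr, Nat.testBit_two_pow_mul_add _ hr',
    Nat.testBit_two_pow_mul_add _ (Nat.and_lt_two_pow r hr')]
  split_ifs <;> rfl

lemma sigma2_and_two_pow_mul_add {k r r' : ℕ} (hr : r < 2 ^ k) (hr' : r' < 2 ^ k) (a c : ℕ) :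
    sigma2 ((2 ^ k * a + r) &&& (2 ^ k * c + r')) = sigma2 (r &&& r') + sigma2 (a &&& c) := by
  rw [two_pow_mul_add_and_two_pow_mul_add hr hr', sigma2_two_pow_mul_add (Nat.and_lt_two_pow r hr')]

lemma sigma2_and_sub_one {n : ℕ} (hn : 0 < n) : sigma2 (n &&& (n - 1)) + 1 = sigma2 n := by
  induction n using Nat.strong_induction_on with
  | _ n ih =>
    obtain ⟨a, r, hr, rfl⟩ : ∃ a r, r < 2 ^ 1 ∧ n = 2 ^ 1 * a + r :=
      ⟨n / 2, n % 2, Nat.mod_lt _ (by norm_num), by omega⟩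
    obtain ⟨a', r', hr', hsub⟩ : ∃ a' r', r' < 2 ^ 1 ∧ 2 ^ 1 * a + r - 1 = 2 ^ 1 * a' + r' :=
      ⟨_, _, Nat.mod_lt _ (by norm_num), (Nat.div_add_mod _ _).symm⟩
    rw [hsub, sigma2_and_two_pow_mul_add hr hr', sigma2_two_pow_mul_add hr]
    obtain ⟨rfl, rfl, rfl⟩ | ⟨rfl, rfl, rfl⟩ :
        (r = 0 ∧ a' = a - 1 ∧ r' = 1) ∨ (r = 1 ∧ a' = a ∧ r' = 0) := by
      omega
    · have hlow : sigma2 (0 &&& 1) = sigma2 0 := by decide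
      have := ih a (by omega) (by omega)
      omega
    · have hlow : sigma2 (1 &&& 0) + 1 = sigma2 1 := by decide
      rw [Nat.and_self]
      omega

lemma sigma2_and_sub_three {b : ℕ} (hb : 3 ≤ b) : sigma2 (b &&& (b - 3)) + 1 + b % 2 = sigma2 b := by
  obtain ⟨m, r, hr, rfl⟩ : ∃ m r, r < 2 ^ 2 ∧ b = 2 ^ 2 * m + r :=
    ⟨b / 4, b % 4, Nat.mod_lt _ (by norm_num), by omega⟩
  obtain ⟨m', r', hr', hsub⟩ : ∃ m' r', r' < 2 ^ 2 ∧ 2 ^ 2 * m + r - 3 = 2 ^ 2 * m' + r' :=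
    ⟨_, _, Nat.mod_lt _ (by norm_num), (Nat.div_add_mod _ _).symm⟩
  rw [hsub, sigma2_and_two_pow_mul_add hr hr', sigma2_two_pow_mul_add hr]
  obtain ⟨rfl, rfl⟩ | ⟨rfl, rfl, rfl⟩ : (m' = m - 1 ∧ r' = r + 1) ∨ (m' = m ∧ r = 3 ∧ r' = 0) := by
    omega
  · have hlow : sigma2 (r &&& (r + 1)) + r % 2 = sigma2 r := by
      have : r < 3 := by omega
      interval_cases r <;> decide
    have := sigma2_and_sub_one (n := m) (by omega)
    omega
  · have hlow : sigma2 (3 &&& 0) + 2 = sigma2 3 := by decide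
    rw [Nat.and_self]
    omega

theorem stmt_4 (b : ℕ) :
    (Odd b → 1 < b → ((twoPows b ∩ twoPows (b - 3)).card : ℤ) = (sigma2 b : ℤ) - 2) ∧
      (Even b → 2 < b → ((twoPows b ∩ twoPows (b - 3)).card : ℤ) = (sigma2 b : ℤ) - 1) := by
  rw [card_twoPows_inter, ← sigma2_eq_card_bitSet, Nat.odd_iff, Nat.even_iff]
  constructor <;> intro hpar hb <;> have := sigma2_and_sub_three (b := b) (by omega) <;> omega
end

section
/- For natural numbers n ≥ k ≥ 1, the 2-adic valuation of the Stirling number of the second kind S(n,k) satisfies ν(S(n,k)) ≥ σ(k) - σ(n) (the minimum zero estimate). -/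
/-!
Counting partitions into `k + 1` blocks with one block marked, by the number `j` of points
outside the marked block, gives `(k + 1) S(n, k + 1) = ∑_{j < n} C(n, j) S(j, k)`. By Kummer's
theorem `2 ^ σ(n) C(n, j)` is divisible by `2 ^ (σ(j) + σ(n - j))`, and `σ(n - j) ≥ 1`, so
induction on `k` gives `2 ^ k ∣ 2 ^ σ(n) k! S(n, k)`. Legendre's formula `ν(k!) = k - σ(k)`
turns this into the bound.
-/

open Nat Finset

lemma padicValNat_two_factorial (n : ℕ) : padicValNat 2 n ! = n - sigma2 n := by
  simpa [sigma2] using sub_one_mul_padicValNat_factorial (p := 2) n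

lemma sigma2_le_self (n : ℕ) : sigma2 n ≤ n := digit_sum_le 2 n

lemma one_le_sigma2 {n : ℕ} (hn : n ≠ 0) : 1 ≤ sigma2 n := by
  have := padicValNat_factorial_lt_of_ne_zero 2 hn
  rw [padicValNat_two_factorial] at this
  omega

lemma sigma2_add_eq (a b : ℕ) :
    sigma2 a + sigma2 b = sigma2 (a + b) + padicValNat 2 ((a + b).choose a) := by
  have hfac : (a + b).choose a * (a ! * b !) = (a + b)! := by
    have := choose_mul_factorial_mul_factorial (Nat.le_add_right a b)
    rwa [add_tsub_cancel_left, mul_assoc] at this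
  have hval := congrArg (padicValNat 2) hfac
  rw [padicValNat.mul (choose_pos (Nat.le_add_right a b)).ne' (by positivity),
    padicValNat.mul (by positivity) (by positivity), padicValNat_two_factorial,
    padicValNat_two_factorial, padicValNat_two_factorial] at hval
  have := sigma2_le_self a
  have := sigma2_le_self b
  have := sigma2_le_self (a + b)
  omega

lemma two_pow_sigma2_add_dvd_choose {n j : ℕ} (hjn : j ≤ n) :
    2 ^ (sigma2 j + sigma2 (n - j)) ∣ 2 ^ sigma2 n * n.choose j := by
  obtain ⟨b, rfl⟩ := exists_add_of_le hjn
  rw [add_tsub_cancel_left, sigma2_add_eq, pow_add]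
  exact mul_dvd_mul_left _ pow_padicValNat_dvd

lemma stirling2_succ_succ (n k : ℕ) :
    stirling2 (n + 1) (k + 1) = (k + 1) * stirling2 n (k + 1) + stirling2 n k := rfl

lemma stirling2_succ_succ_eq_sum_choose (n k : ℕ) :
    stirling2 (n + 1) (k + 1) = ∑ j ∈ range (n + 1), n.choose j * stirling2 j k := by
  induction n generalizing k with
  | zero => simp [stirling2]
  | succ n ih =>
    have hpascal := sum_choose_succ_mul (R := ℕ) (fun j _ => stirling2 j k) n
    simp only [Nat.cast_id] at hpascal
    rw [hpascal, stirling2_succ_succ, ← ih]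
    cases k with
    | zero => simp [stirling2]
    | succ k =>
      rw [ih (k + 1), ih k]
      simp only [stirling2_succ_succ, mul_add, sum_add_distrib, mul_left_comm _ (k + 1),
        ← mul_sum]
      ring

lemma succ_mul_stirling2_succ (n k : ℕ) :
    (k + 1) * stirling2 n (k + 1) = ∑ j ∈ range n, n.choose j * stirling2 j k := by
  have h := stirling2_succ_succ_eq_sum_choose n k
  rw [sum_range_succ, choose_self, one_mul, stirling2_succ_succ] at h
  omega

lemma stirling2_pos {n k : ℕ} (hk : 1 ≤ k) (hkn : k ≤ n) : 0 < stirling2 n k := by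
  induction n generalizing k with
  | zero => omega
  | succ n ih =>
    obtain ⟨k, rfl⟩ := exists_add_of_le hk
    rw [add_comm 1 k, stirling2_succ_succ]
    rcases k.eq_zero_or_pos with rfl | hk0
    · rcases n.eq_zero_or_pos with rfl | hn0
      · decide
      · have := ih le_rfl hn0
        positivity
    · have := ih hk0 (by omega)
      positivity

lemma two_pow_dvd_factorial_mul_stirling2 (n k : ℕ) :
    2 ^ k ∣ 2 ^ sigma2 n * (k ! * stirling2 n k) := by
  induction k generalizing n with
  | zero => simp
  | succ k ih =>
    rw [factorial_succ, mul_comm (k + 1), mul_assoc, succ_mul_stirling2_succ, mul_sum, mul_sum]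
    refine dvd_sum fun j hj => ?_
    have hjn : j < n := mem_range.mp hj
    have hprod := mul_dvd_mul (two_pow_sigma2_add_dvd_choose hjn.le) (ih j)
    have hsigma : 1 ≤ sigma2 (n - j) := one_le_sigma2 (by omega)
    refine Nat.dvd_of_mul_dvd_mul_right (k := 2 ^ sigma2 j) (by positivity) ?_
    calc 2 ^ (k + 1) * 2 ^ sigma2 j ∣ 2 ^ (sigma2 j + sigma2 (n - j)) * 2 ^ k := by
          rw [← pow_add, ← pow_add]; exact pow_dvd_pow 2 (by omega)
      _ ∣ 2 ^ sigma2 n * n.choose j * (2 ^ sigma2 j * (k ! * stirling2 j k)) := hprod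
      _ = 2 ^ sigma2 n * (k ! * (n.choose j * stirling2 j k)) * 2 ^ sigma2 j := by ring

theorem stmt_5 (n k : ℕ) (hk : 1 ≤ k) (hkn : k ≤ n) :
    (padicValNat 2 (stirling2 n k) : ℤ) ≥ (sigma2 k : ℤ) - sigma2 n := by
  have hS := (stirling2_pos hk hkn).ne'
  have hdvd := two_pow_dvd_factorial_mul_stirling2 n k
  rw [padicValNat_dvd_iff_le (by positivity), padicValNat.mul (by positivity) (by positivity),
    padicValNat.mul (by positivity) hS, padicValNat.prime_pow, padicValNat_two_factorial] at hdvd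
  have := sigma2_le_self k
  omega
end

section
/- For natural numbers n ≥ k ≥ 1, the 2-adic valuation of the Stirling number of the second kind satisfies ν(S(n,k)) ≥ σ(k-1) - σ(n-1) (the shifted minimum zero estimate). -/
/-!
With ν the 2-adic valuation, Legendre gives ν(k!) = k - σ(k), so the claim says
ν(k! S(n+1, k+1)) ≥ k - σ(n). Classifying partitions by the block of the last element gives
S(n+1, k+1) = ∑_{t ≤ n} C(n,t) S(t,k), hence also (k+1) S(n, k+1) = ∑_{t < n} C(n,t) S(t,k).
By Kummer, ν(C(n,t)) = σ(t) + σ(n-t) - σ(n), so the second identity proves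
ν(k! S(n,k)) ≥ k - σ(n) by induction on k (the gain σ(n-t) ≥ 1 for t < n pays for the new
factor k+1), and the first identity then transfers this bound to the shifted one.
-/

open Finset Nat

theorem stirling2_eq_stirlingSecond : stirling2 = stirlingSecond := by
  funext n k
  induction n generalizing k with
  | zero => cases k <;> rfl
  | succ n ih => cases k <;> simp [stirling2, stirlingSecond, ih]

namespace Nat

theorem stirlingSecond_le_succ_left (n : ℕ) {k : ℕ} (hk : k ≠ 0) :
    stirlingSecond n k ≤ stirlingSecond (n + 1) k := by
  rw [stirlingSecond_succ_left n k hk]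
  nlinarith [Nat.one_le_iff_ne_zero.mpr hk]

theorem stirlingSecond_pos {n k : ℕ} (hk : k ≠ 0) (hkn : k ≤ n) : 0 < stirlingSecond n k :=
  calc 0 < stirlingSecond k k := by rw [stirlingSecond_self]; exact one_pos
    _ ≤ stirlingSecond n k :=
      monotone_nat_of_le_succ (fun m => stirlingSecond_le_succ_left m hk) hkn

/-- Classify the partitions of `{0, …, n}` by the `t` elements outside the block of `n`. -/
theorem stirlingSecond_succ_succ_eq_sum (n k : ℕ) :
    stirlingSecond (n + 1) (k + 1) = ∑ t ∈ range (n + 1), n.choose t * stirlingSecond t k := by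
  induction n generalizing k with
  | zero => simp [stirlingSecond_succ_succ]
  | succ n ih =>
    have pascal := sum_choose_succ_mul (R := ℕ) (fun t _ => stirlingSecond t k) n
    simp only [Nat.cast_id] at pascal
    rw [pascal, ← ih, stirlingSecond_succ_succ (n + 1)]
    cases k with
    | zero => simp
    | succ j =>
      simp only [stirlingSecond_succ_succ, mul_add, sum_add_distrib, ← ih, mul_left_comm _ (j + 1),
        ← mul_sum]
      ring

theorem succ_mul_stirlingSecond_eq_sum (n k : ℕ) :
    (k + 1) * stirlingSecond n (k + 1) = ∑ t ∈ range n, n.choose t * stirlingSecond t k := by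
  have h := stirlingSecond_succ_succ_eq_sum n k
  rw [sum_range_succ, choose_self, one_mul, stirlingSecond_succ_succ] at h
  omega

end Nat

theorem sigma2_add_padicValNat_factorial (n : ℕ) : sigma2 n + padicValNat 2 n ! = n := by
  have legendre := sub_one_mul_padicValNat_factorial (p := 2) n
  have := digit_sum_le 2 n
  rw [sigma2]
  omega

theorem sigma2_pos {n : ℕ} (hn : n ≠ 0) : 0 < sigma2 n := by
  have := sigma2_add_padicValNat_factorial n
  have := padicValNat_factorial_lt_of_ne_zero 2 hn
  omega

/-- Kummer's theorem, as a divisibility. -/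
theorem two_pow_sigma2_dvd_choose {n t : ℕ} (h : t ≤ n) :
    2 ^ (sigma2 t + sigma2 (n - t)) ∣ 2 ^ sigma2 n * n.choose t := by
  have kummer := sub_one_mul_padicValNat_choose_eq_sub_sum_digits (p := 2) h
  have hc : n.choose t ≠ 0 := (choose_pos h).ne'
  refine (pow_dvd_pow 2 ?_).trans pow_padicValNat_dvd
  rw [padicValNat.mul (by positivity) hc, padicValNat.prime_pow, sigma2, sigma2, sigma2]
  omega

theorem two_pow_dvd_choose_mul {n t k x : ℕ} (h : t ≤ n) (hx : 2 ^ k ∣ 2 ^ sigma2 t * x) :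
    2 ^ (k + sigma2 (n - t)) ∣ 2 ^ sigma2 n * (n.choose t * x) := by
  rw [← mul_dvd_mul_iff_left (pow_ne_zero (sigma2 t) two_ne_zero)]
  convert mul_dvd_mul (two_pow_sigma2_dvd_choose h) hx using 1 <;> ring

theorem two_pow_dvd_factorial_mul_stirlingSecond (n k : ℕ) :
    2 ^ k ∣ 2 ^ sigma2 n * (k ! * stirlingSecond n k) := by
  induction k generalizing n with
  | zero => simp
  | succ k ih =>
    rw [factorial_succ, mul_comm (k + 1), mul_assoc, succ_mul_stirlingSecond_eq_sum, mul_sum,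
      mul_sum]
    refine dvd_sum fun t ht => ?_
    have ht : t < n := mem_range.mp ht
    have h := two_pow_dvd_choose_mul ht.le (ih t)
    refine (pow_dvd_pow 2 ?_).trans (h.trans (dvd_of_eq (by ring)))
    have := sigma2_pos (Nat.sub_ne_zero_of_lt ht)
    omega

theorem two_pow_dvd_factorial_mul_stirlingSecond_succ_succ (n k : ℕ) :
    2 ^ k ∣ 2 ^ sigma2 n * (k ! * stirlingSecond (n + 1) (k + 1)) := by
  rw [stirlingSecond_succ_succ_eq_sum, mul_sum, mul_sum]
  refine dvd_sum fun t ht => ?_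
  have h := two_pow_dvd_choose_mul (mem_range_succ_iff.mp ht)
    (two_pow_dvd_factorial_mul_stirlingSecond t k)
  exact (pow_dvd_pow 2 (le_add_right _ _)).trans (h.trans (dvd_of_eq (by ring)))

theorem sigma2_le_padicValNat_stirlingSecond_succ_succ_add (n k : ℕ) (hkn : k ≤ n) :
    sigma2 k ≤ padicValNat 2 (stirlingSecond (n + 1) (k + 1)) + sigma2 n := by
  have hS := (stirlingSecond_pos (by omega) (by omega : k + 1 ≤ n + 1)).ne'
  have hdvd := two_pow_dvd_factorial_mul_stirlingSecond_succ_succ n k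
  rw [padicValNat_dvd_iff_le (by positivity), padicValNat.mul (by positivity) (by positivity),
    padicValNat.mul (by positivity) hS, padicValNat.prime_pow] at hdvd
  have := sigma2_add_padicValNat_factorial k
  omega

theorem stmt_6 (n k : ℕ) (hk : 1 ≤ k) (hkn : k ≤ n) :
    (padicValNat 2 (stirling2 n k) : ℤ) ≥ (sigma2 (k - 1) : ℤ) - sigma2 (n - 1) := by
  obtain ⟨m, rfl⟩ : ∃ m, n = m + 1 := ⟨n - 1, by omega⟩
  obtain ⟨j, rfl⟩ : ∃ j, k = j + 1 := ⟨k - 1, by omega⟩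
  have := sigma2_le_padicValNat_stirlingSecond_succ_succ_add m j (by omega)
  simp only [add_tsub_cancel_right, stirling2_eq_stirlingSecond]
  omega
end

section
/- Let b, c, m, h be positive integers with b·2^{h+1} + 2^h < 2^m and c odd, and set a = 2^{h+1} - 1. Then ν(S(c·2^m + b·2^{h+1} + 2^h, b·2^{h+2} + a)) = σ(a) - 1 = h. -/
/-!
Work over `R = ℤ/2^(h+1)` with `n = 2^h`, so that `2n = 0` and `n² = 0` in `R`. The column
generating function satisfies `(∏_{j ≤ k} (1 - jX)) · ∑_N S(N, k) X^N = X^k`. Since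
`k + 1 = (2b+1)·2n` and `1 - jX` is `2n`-periodic in `j`, the product is the `(2b+1)`-st power
of `∏_{v < 2n} (1 - vX)`, and pairing `v` with `2n - v` gives
`(1 - nX) ∏_{v < 2n} (1 - vX) = P(X²)` with `P = ∏_{v < n} (1 - (v+1)² X)`. As `(1 - nX)² = 1`,
the generating function is `X^k (1 - nX) P(X²)^{-(2b+1)}`, so its coefficient at the odd offset
`N - k = 2t + 1` is `-n` times the `t`-th coefficient of `P^{-(2b+1)}`. Modulo 2 the odd squares
are `1` and the even ones `0`, so `P ≡ (1 - X)^(n/2)` and that coefficient is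
`C(s - 1 + t, s - 1)` with `s = (n/2)(2b+1)`. Here `s + t = c·2^(m-1)` and `s ≤ 2^(m-1)`, so
Lucas' theorem makes it odd, whence `S(N, k) ≡ 2^h` modulo `2^(h+1)`.
-/

open PowerSeries Finset

theorem Finset.prod_range_mul_eq_pow_of_periodic {M : Type*} [CommMonoid M] {f : ℕ → M}
    {n : ℕ} (hf : Function.Periodic f n) (u : ℕ) :
    ∏ j ∈ range (u * n), f j = (∏ j ∈ range n, f j) ^ u := by
  induction u with
  | zero => simp
  | succ u ih =>
    rw [Nat.succ_mul, prod_range_add, ih, pow_succ]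
    congr 1
    exact prod_congr rfl fun j _ => by rw [add_comm]; exact hf.nat_mul u j

theorem one_sub_mul_prod_range_one_sub_mul {A : Type*} [CommRing A] (x : A) {n : ℕ}
    (h2n : (2 * n : A) = 0) :
    (1 - n * x) * ∏ v ∈ range (2 * n), (1 - v * x)
      = ∏ v ∈ range n, (1 - ((v + 1 : ℕ) : A) ^ 2 * x ^ 2) := by
  have hlow : (1 - n * x) * ∏ v ∈ range n, (1 - v * x)
      = ∏ v ∈ range n, (1 - ((v + 1 : ℕ) : A) * x) := by
    rw [mul_comm, ← prod_range_succ (fun v : ℕ => 1 - (v : A) * x), prod_range_succ']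
    simp
  -- `n + (n - 1 - v) = 2n - (v + 1)`, which is `-(v + 1)` in `A`
  have hhigh : ∏ v ∈ range n, (1 - ((n + v : ℕ) : A) * x)
      = ∏ v ∈ range n, (1 + ((v + 1 : ℕ) : A) * x) := by
    rw [← prod_range_reflect]
    refine prod_congr rfl fun v hv => ?_
    have hv : v < n := mem_range.mp hv
    rw [show n + (n - 1 - v) = 2 * n - (v + 1) by omega, Nat.cast_sub (by omega)]
    push_cast
    linear_combination (-x) * h2n
  rw [two_mul, prod_range_add, ← mul_assoc, hlow, hhigh, ← prod_mul_distrib]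
  exact prod_congr rfl fun v _ => by ring

section GeneratingFunction

variable (R : Type*) [CommRing R]

noncomputable def stirling2Series (k : ℕ) : R⟦X⟧ := mk fun n => (stirling2 n k : R)

theorem stirling2Series_zero : stirling2Series R 0 = 1 := by
  ext (_ | n) <;> simp [stirling2Series, stirling2, coeff_one]

theorem one_sub_mul_stirling2Series_succ (k : ℕ) :
    (1 - ((k + 1 : ℕ) : R⟦X⟧) * X) * stirling2Series R (k + 1) = X * stirling2Series R k := by
  ext (_ | n)
  · simp [stirling2Series, stirling2]
  · rw [← map_natCast (C (R := R)), sub_mul, one_mul, map_sub, mul_assoc, coeff_C_mul,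
      coeff_succ_X_mul, coeff_succ_X_mul]
    simp only [stirling2Series, coeff_mk, stirling2]
    push_cast
    ring

theorem prod_one_sub_mul_stirling2Series (k : ℕ) :
    (∏ j ∈ range (k + 1), (1 - (j : R⟦X⟧) * X)) * stirling2Series R k = X ^ k := by
  induction k with
  | zero => simp [stirling2Series_zero]
  | succ k ih =>
    rw [prod_range_succ, mul_assoc, one_sub_mul_stirling2Series_succ, mul_left_comm, ih, pow_succ']

end GeneratingFunction

section OneSubSqProd

variable (R : Type*) [CommRing R]

noncomputable def oneSubSqProd (n : ℕ) : R⟦X⟧ :=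
  ∏ v ∈ range n, (1 - ((v + 1 : ℕ) : R⟦X⟧) ^ 2 * X)

theorem expand_oneSubSqProd (n : ℕ) :
    expand 2 two_ne_zero (oneSubSqProd R n)
      = ∏ v ∈ range n, (1 - ((v + 1 : ℕ) : R⟦X⟧) ^ 2 * X ^ 2) := by
  simp [oneSubSqProd, map_prod]

theorem isUnit_oneSubSqProd (n : ℕ) : IsUnit (oneSubSqProd R n) := by
  simp [isUnit_iff_constantCoeff, oneSubSqProd]

end OneSubSqProd

theorem map_oneSubSqProd {R S : Type*} [CommRing R] [CommRing S] (f : R →+* S) (n : ℕ) :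
    map f (oneSubSqProd R n) = oneSubSqProd S n := by
  simp [oneSubSqProd, map_prod]

theorem oneSubSqProd_two_mul_zmod_two (w : ℕ) : oneSubSqProd (ZMod 2) (2 * w) = (1 - X) ^ w := by
  induction w with
  | zero => simp [oneSubSqProd]
  | succ w ih =>
    have hodd : ((2 * w + 1 : ℕ) : (ZMod 2)⟦X⟧) ^ 2 = 1 := by
      rw [← map_natCast (C (R := ZMod 2))]; simp [show (2 : ZMod 2) = 0 from rfl]
    have heven : ((2 * w + 2 : ℕ) : (ZMod 2)⟦X⟧) = 0 := by
      rw [← map_natCast (C (R := ZMod 2))]; simp [show (2 : ZMod 2) = 0 from rfl]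
    rw [oneSubSqProd, mul_add_one, prod_range_succ, prod_range_succ, ← oneSubSqProd, ih, hodd,
      heven]
    ring

section TwoTorsion

variable {R : Type*} [CommRing R] {n : ℕ} (h2n : (2 * n : R) = 0) (hnsq : (n : R) ^ 2 = 0)
include h2n hnsq

theorem expand_mul_stirling2Series {b k : ℕ} (hk : k + 1 = (2 * b + 1) * (2 * n)) :
    expand 2 two_ne_zero (oneSubSqProd R n ^ (2 * b + 1)) * stirling2Series R k
      = (1 - (n : R⟦X⟧) * X) * X ^ k := by
  have h2n' : (2 * n : R⟦X⟧) = 0 := by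
    simpa only [map_mul, map_ofNat, map_natCast, map_zero] using congrArg (C (R := R)) h2n
  have hnsq' : (n : R⟦X⟧) ^ 2 = 0 := by
    simpa only [map_pow, map_natCast, map_zero] using congrArg (C (R := R)) hnsq
  have hsq : (1 - (n : R⟦X⟧) * X) ^ 2 = 1 := by
    linear_combination X ^ 2 * hnsq' - X * h2n'
  have hper : Function.Periodic (fun j : ℕ => 1 - (j : R⟦X⟧) * X) (2 * n) := fun j => by
    push_cast
    linear_combination (-X) * h2n'
  calc expand 2 two_ne_zero (oneSubSqProd R n ^ (2 * b + 1)) * stirling2Series R k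
      = ((1 - (n : R⟦X⟧) * X) * ∏ v ∈ range (2 * n), (1 - (v : R⟦X⟧) * X)) ^ (2 * b + 1)
          * stirling2Series R k := by
        rw [map_pow, expand_oneSubSqProd, one_sub_mul_prod_range_one_sub_mul X h2n']
    _ = (1 - (n : R⟦X⟧) * X)
          * ((∏ j ∈ range (k + 1), (1 - (j : R⟦X⟧) * X)) * stirling2Series R k) := by
        rw [mul_pow, hk, prod_range_mul_eq_pow_of_periodic hper, pow_succ, pow_mul, hsq, one_pow,
          one_mul, mul_assoc]
    _ = (1 - (n : R⟦X⟧) * X) * X ^ k := by rw [prod_one_sub_mul_stirling2Series]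

theorem cast_stirling2_add_odd {b k : ℕ} (hk : k + 1 = (2 * b + 1) * (2 * n)) (t : ℕ)
    {Q : R⟦X⟧} (hQ : Q * oneSubSqProd R n ^ (2 * b + 1) = 1) :
    (stirling2 (k + (2 * t + 1)) k : R) = -(n * coeff t Q) := by
  set E := expand 2 two_ne_zero Q
  have hGF : stirling2Series R k = X ^ k * ((1 - C (n : R) * X) * E) := by
    have hE : E * expand 2 two_ne_zero (oneSubSqProd R n ^ (2 * b + 1)) = 1 := by
      rw [← map_mul, hQ, map_one]
    calc stirling2Series R k
        = E * (expand 2 two_ne_zero (oneSubSqProd R n ^ (2 * b + 1)) * stirling2Series R k) := by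
          rw [← mul_assoc, hE, one_mul]
      _ = _ := by rw [expand_mul_stirling2Series h2n hnsq hk, map_natCast]; ring
  have hodd : coeff (2 * t + 1) E = 0 := coeff_expand_of_not_dvd 2 two_ne_zero Q (by omega)
  have heven : coeff (2 * t) E = coeff t Q := coeff_expand_mul 2 two_ne_zero Q t
  have := congrArg (coeff (2 * t + 1 + k)) hGF
  rw [stirling2Series, coeff_mk, coeff_X_pow_mul, sub_mul, one_mul, map_sub, mul_assoc,
    coeff_C_mul, coeff_succ_X_mul, hodd, heven] at this
  rw [add_comm k, this]
  ring

end TwoTorsion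

theorem sigma2_two_pow_sub_one (n : ℕ) : sigma2 (2 ^ n - 1) = n := by
  induction n with
  | zero => simp [sigma2]
  | succ n ih =>
    have hpos : 0 < 2 ^ n := Nat.two_pow_pos n
    rw [sigma2, Nat.digits_def' one_lt_two (by rw [pow_succ]; omega), List.sum_cons,
      show (2 ^ (n + 1) - 1) / 2 = 2 ^ n - 1 by rw [pow_succ]; omega, ← sigma2, ih]
    rw [pow_succ]; omega

theorem odd_choose_mul_two_pow_sub_one {c : ℕ} (hc : 0 < c) (N : ℕ) :
    ∀ j < 2 ^ N, Odd ((c * 2 ^ N - 1).choose j) := by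
  induction N with
  | zero =>
    intro j hj
    simp [show j = 0 by simpa using hj]
  | succ N ih =>
    intro j hj
    have hpos : 0 < c * 2 ^ N := Nat.mul_pos hc (Nat.two_pow_pos N)
    have hsucc : c * 2 ^ (N + 1) = 2 * (c * 2 ^ N) := by ring
    have hlucas := Choose.choose_modEq_choose_mod_mul_choose_div_nat
      (p := 2) (n := c * 2 ^ (N + 1) - 1) (k := j)
    rw [hsucc, show (2 * (c * 2 ^ N) - 1) % 2 = 1 by omega,
      show (2 * (c * 2 ^ N) - 1) / 2 = c * 2 ^ N - 1 by omega] at hlucas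
    have hbit : (1).choose (j % 2) = 1 := by
      rcases Nat.mod_two_eq_zero_or_one j with h | h <;> simp [h]
    rw [hsucc, Nat.odd_iff, hlucas, hbit, one_mul, ← Nat.odd_iff]
    exact ih (j / 2) (by rw [pow_succ] at hj; omega)

theorem coeff_eq_choose_of_mul_one_sub_pow_eq_one {S : Type*} [CommRing S] {G : S⟦X⟧} {d : ℕ}
    (hG : G * (1 - X) ^ d = 1) (hd : 0 < d) (t : ℕ) :
    coeff t G = (d - 1 + t).choose (d - 1) := by
  have hinv := (invOneSubPow S d).inv_val
  rw [invOneSubPow_inv_eq_one_sub_pow] at hinv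
  rw [left_inv_eq_right_inv hG hinv, invOneSubPow_val_eq_mk_sub_one_add_choose_of_pos S d hd,
    coeff_mk]

theorem ZMod.natCast_two_pow_mul_eq_of_cast_eq_one {h : ℕ} {x : ZMod (2 ^ (h + 1))}
    (hx : (x.cast : ZMod 2) = 1) :
    ((2 ^ h : ℕ) : ZMod (2 ^ (h + 1))) * x = (2 ^ h : ℕ) := by
  have hval : x.val % 2 = 1 := by
    rw [ZMod.cast_eq_val, ZMod.natCast_eq_one_iff_odd] at hx
    exact Nat.odd_iff.mp hx
  have hM : ((2 ^ (h + 1) : ℕ) : ZMod (2 ^ (h + 1))) = 0 := ZMod.natCast_self _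
  rw [← ZMod.natCast_zmod_val x, show x.val = 2 * (x.val / 2) + 1 by omega]
  push_cast at hM ⊢
  linear_combination ((x.val / 2 : ℕ) : ZMod (2 ^ (h + 1))) * hM

theorem padicValNat_eq_of_natCast_eq_pow {p h N : ℕ} [hp : Fact p.Prime]
    (hN : (N : ZMod (p ^ (h + 1))) = (p ^ h : ℕ)) : padicValNat p N = h := by
  rw [ZMod.natCast_eq_natCast_iff', Nat.mod_eq_of_lt (Nat.pow_lt_pow_succ hp.out.one_lt)] at hN
  have hdecomp : N = p ^ h * (p * (N / p ^ (h + 1)) + 1) := by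
    rw [mul_add, ← mul_assoc, ← pow_succ, mul_one, ← hN, Nat.div_add_mod]
  have hndvd : ¬ p ∣ p * (N / p ^ (h + 1)) + 1 := fun hdvd =>
    hp.out.one_lt.ne' (Nat.dvd_one.mp ((Nat.dvd_add_right (dvd_mul_right _ _)).mp hdvd))
  rw [hdecomp, padicValNat.mul (pow_ne_zero _ hp.out.ne_zero) (by omega), padicValNat.prime_pow,
    padicValNat.eq_zero_of_not_dvd hndvd, add_zero]

theorem padicValNat_stirling2_add_odd {h b k : ℕ} (hk : k + 1 = (2 * b + 1) * 2 ^ (h + 2))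
    {t : ℕ} (hodd : Odd ((2 ^ h * (2 * b + 1) - 1 + t).choose (2 ^ h * (2 * b + 1) - 1))) :
    padicValNat 2 (stirling2 (k + (2 * t + 1)) k) = h + 1 := by
  set n := 2 ^ (h + 1)
  have h2n : (2 * n : ZMod (2 ^ (h + 2))) = 0 := by
    have hcast : ((2 * n : ℕ) : ZMod (2 ^ (h + 2))) = 0 := by
      rw [← pow_succ']; exact ZMod.natCast_self _
    exact_mod_cast hcast
  have hnsq : (n : ZMod (2 ^ (h + 2))) ^ 2 = 0 := by
    rw [← Nat.cast_pow, ZMod.natCast_eq_zero_iff, ← pow_mul]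
    exact pow_dvd_pow 2 (by omega)
  obtain ⟨Q, hQ⟩ :=
    ((isUnit_oneSubSqProd (ZMod (2 ^ (h + 2))) n).pow (2 * b + 1)).exists_left_inv
  have hS := cast_stirling2_add_odd h2n hnsq (by rw [hk, pow_succ']) t hQ
  set φ := ZMod.castHom (dvd_pow_self 2 (Nat.succ_ne_zero (h + 1))) (ZMod 2)
  have hQmod : map φ Q * (1 - X) ^ (2 ^ h * (2 * b + 1)) = 1 := by
    rw [pow_mul, ← oneSubSqProd_two_mul_zmod_two, ← pow_succ', ← map_oneSubSqProd φ, ← map_pow,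
      ← map_mul, hQ, map_one]
  have hγ : (coeff t Q).cast = (1 : ZMod 2) := by
    change φ (coeff t Q) = 1
    rw [← coeff_map, coeff_eq_choose_of_mul_one_sub_pow_eq_one hQmod (by positivity),
      ZMod.natCast_eq_one_iff_odd]
    exact hodd
  apply padicValNat_eq_of_natCast_eq_pow
  rw [hS, ZMod.natCast_two_pow_mul_eq_of_cast_eq_one hγ]
  exact neg_eq_of_add_eq_zero_left (by rw [← two_mul]; exact h2n)

theorem stmt_13_general (b c m h : ℕ) (hc : 0 < c) (hh : 0 < h)
    (hbm : b * 2 ^ (h + 1) + 2 ^ h < 2 ^ m) :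
    (padicValNat 2 (stirling2 (c * 2 ^ m + b * 2 ^ (h + 1) + 2 ^ h)
        (b * 2 ^ (h + 2) + (2 ^ (h + 1) - 1))) : ℤ) = (sigma2 (2 ^ (h + 1) - 1) : ℤ) - 1 ∧
      (sigma2 (2 ^ (h + 1) - 1) : ℤ) - 1 = h := by
  rw [sigma2_two_pow_sub_one, Nat.cast_add, Nat.cast_one, add_sub_cancel_right]
  refine ⟨?_, rfl⟩
  -- shift `h` and `m` down by one, so that `2^(h-1)` and `2^(m-1)` become plain powers
  obtain ⟨h, rfl⟩ := Nat.exists_eq_add_one.mpr hh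
  obtain ⟨m, rfl⟩ : ∃ m', m = m' + 1 := Nat.exists_eq_add_one.mpr <| Nat.pos_of_ne_zero <| by
    rintro rfl
    simp at hbm
  have hP : 0 < 2 ^ h := Nat.two_pow_pos h
  have hcm : 2 ^ m ≤ c * 2 ^ m := Nat.le_mul_of_pos_left _ hc
  have hlin : b * 2 ^ (h + 1 + 1) = 4 * (b * 2 ^ h) ∧ b * 2 ^ (h + 1 + 2) = 8 * (b * 2 ^ h) ∧
      c * 2 ^ (m + 1) = 2 * (c * 2 ^ m) ∧ 2 ^ h * (2 * b + 1) = 2 * (b * 2 ^ h) + 2 ^ h ∧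
      (2 * b + 1) * 2 ^ (h + 2) = 8 * (b * 2 ^ h) + 4 * 2 ^ h := by
    refine ⟨?_, ?_, ?_, ?_, ?_⟩ <;> ring
  set s := 2 ^ h * (2 * b + 1)
  set t := c * 2 ^ m - s
  rw [show c * 2 ^ (m + 1) + b * 2 ^ (h + 1 + 1) + 2 ^ (h + 1)
      = b * 2 ^ (h + 1 + 2) + (2 ^ (h + 1 + 1) - 1) + (2 * t + 1) by omega,
    padicValNat_stirling2_add_odd (h := h) (b := b) (by omega)]
  rw [show s - 1 + t = c * 2 ^ m - 1 by omega]
  exact odd_choose_mul_two_pow_sub_one hc m (s - 1) (by omega)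

theorem stmt_13 (b c m h : ℕ) (hb : 0 < b) (hc : 0 < c) (hm : 0 < m) (hh : 0 < h)
    (hbm : b * 2 ^ (h + 1) + 2 ^ h < 2 ^ m) (hcodd : Odd c) :
    (padicValNat 2 (stirling2 (c * 2 ^ m + b * 2 ^ (h + 1) + 2 ^ h)
        (b * 2 ^ (h + 2) + (2 ^ (h + 1) - 1))) : ℤ) = (sigma2 (2 ^ (h + 1) - 1) : ℤ) - 1 ∧
      (sigma2 (2 ^ (h + 1) - 1) : ℤ) - 1 = h :=
  stmt_13_general b c m h hc hh hbm
end

section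
/- Let u = (u_1, u_2, u_3, ...) be a finitely supported sequence of natural numbers, w = Σ i·u_i, d = Σ u_i, and ν(u) = Σ u_i·ν(i+1), where ν is the 2-adic valuation. If w ≤ n then n - ν(u) ≥ n - w + (w - d)/2; moreover n - ν(u) = (w - d)/2 if and only if n = w and u_i = 0 for all i except possibly i = 1 and i = 3. -/
lemma two_mul_add_two_le_two_pow {v : ℕ} (hv : 3 ≤ v) : 2 * v + 2 ≤ 2 ^ v := by
  induction v, hv using Nat.le_induction with
  | base => norm_num
  | succ k _ ih => rw [pow_succ]; omega

lemma two_mul_le_two_pow (v : ℕ) : 2 * v ≤ 2 ^ v := by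
  rcases le_or_gt 3 v with hv | hv
  · exact (Nat.le_add_right _ _).trans (two_mul_add_two_le_two_pow hv)
  · interval_cases v <;> norm_num

lemma two_pow_padicValNat_two_le {m : ℕ} (hm : m ≠ 0) : 2 ^ padicValNat 2 m ≤ m :=
  Nat.le_of_dvd (Nat.pos_of_ne_zero hm) pow_padicValNat_dvd

lemma two_mul_padicValNat_two_le (m : ℕ) : 2 * padicValNat 2 m ≤ m := by
  rcases eq_or_ne m 0 with rfl | hm
  · simp
  · exact (two_mul_le_two_pow _).trans (two_pow_padicValNat_two_le hm)

lemma two_mul_padicValNat_two_eq_self_iff {m : ℕ} :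
    2 * padicValNat 2 m = m ↔ m = 0 ∨ m = 2 ∨ m = 4 := by
  constructor
  · intro h
    rcases eq_or_ne m 0 with hm | hm
    · exact Or.inl hm
    have hpow := two_pow_padicValNat_two_le hm
    have hv : padicValNat 2 m ≤ 2 := by
      by_contra! hv
      have := two_mul_add_two_le_two_pow hv
      omega
    interval_cases padicValNat 2 m <;> omega
  · rintro (rfl | rfl | rfl)
    · simp
    · simp
    · rw [show (4 : ℕ) = 2 ^ 2 by norm_num, padicValNat.prime_pow]; norm_num

lemma two_mul_mul_padicValNat_two_le (i c : ℕ) :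
    2 * (c * padicValNat 2 (i + 1)) ≤ c * (i + 1) := by
  rw [mul_left_comm]
  exact Nat.mul_le_mul_left _ (two_mul_padicValNat_two_le _)

namespace Finsupp

lemma two_mul_sum_padicValNat_two_le (u : ℕ →₀ ℕ) :
    2 * (u.sum fun i c => c * padicValNat 2 (i + 1)) ≤ u.sum fun i c => c * (i + 1) := by
  rw [mul_sum]
  exact Finset.sum_le_sum fun i _ => two_mul_mul_padicValNat_two_le i (u i)

lemma two_mul_sum_padicValNat_two_eq_iff (u : ℕ →₀ ℕ) :
    2 * (u.sum fun i c => c * padicValNat 2 (i + 1)) = (u.sum fun i c => c * (i + 1)) ↔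
      ∀ i, i ≠ 1 → i ≠ 3 → u i = 0 := by
  rw [mul_sum, Finsupp.sum, Finsupp.sum,
    Finset.sum_eq_sum_iff_of_le fun i _ => two_mul_mul_padicValNat_two_le i (u i)]
  refine ⟨fun h i hi1 hi3 => ?_, fun h i hi => ?_⟩
  · by_contra hi
    have hterm := h i (mem_support_iff.mpr hi)
    rw [mul_left_comm, Nat.mul_left_cancel_iff (Nat.pos_of_ne_zero hi),
      two_mul_padicValNat_two_eq_self_iff] at hterm
    omega
  · have hi13 : i = 1 ∨ i = 3 := by
      by_contra! hi13
      exact mem_support_iff.mp hi (h i hi13.1 hi13.2)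
    rw [mul_left_comm, two_mul_padicValNat_two_eq_self_iff.mpr (by omega)]

end Finsupp

theorem stmt_19_general (u : ℕ →₀ ℕ) (n : ℕ)
    (w d νu : ℕ)
    (hw : w = u.sum fun i c => i * c) (hd : d = u.sum fun _ c => c)
    (hν : νu = u.sum fun i c => c * padicValNat 2 (i + 1))
    (hwn : w ≤ n) :
    ((n : ℚ) - νu ≥ (n : ℚ) - w + ((w : ℚ) - d) / 2) ∧
      ((n : ℚ) - νu = ((w : ℚ) - d) / 2 ↔
        n = w ∧ ∀ i, i ≠ 1 → i ≠ 3 → u i = 0) := by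
  have hwd : w + d = u.sum fun i c => c * (i + 1) := by
    rw [hw, hd, ← Finsupp.sum_add]
    exact Finsupp.sum_congr fun i _ => by ring
  have hle : 2 * νu ≤ w + d := by
    rw [hν, hwd]; exact u.two_mul_sum_padicValNat_two_le
  have heq_iff : 2 * νu = w + d ↔ ∀ i, i ≠ 1 → i ≠ 3 → u i = 0 := by
    rw [hν, hwd]; exact u.two_mul_sum_padicValNat_two_eq_iff
  qify at hle hwn
  refine ⟨by linarith, fun h => ⟨?_, heq_iff.mp ?_⟩, fun ⟨hnw, hzero⟩ => ?_⟩
  · exact_mod_cast (show (n : ℚ) = w by linarith)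
  · exact_mod_cast (show (2 * νu : ℚ) = w + d by linarith)
  · have : (2 * νu : ℚ) = w + d := by exact_mod_cast heq_iff.mpr hzero
    subst hnw
    linarith

theorem stmt_19 (u : ℕ →₀ ℕ) (hu0 : u 0 = 0) (n : ℕ)
    (w d νu : ℕ)
    (hw : w = u.sum fun i c => i * c) (hd : d = u.sum fun _ c => c)
    (hν : νu = u.sum fun i c => c * padicValNat 2 (i + 1))
    (hwn : w ≤ n) :
    ((n : ℚ) - νu ≥ (n : ℚ) - w + ((w : ℚ) - d) / 2) ∧
      ((n : ℚ) - νu = ((w : ℚ) - d) / 2 ↔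
        n = w ∧ ∀ i, i ≠ 1 → i ≠ 3 → u i = 0) :=
  stmt_19_general u n w d νu hw hd hν hwn
end
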